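/- Let (Ω, F, μ) be a probability space, T : Ω → Ω an invertible ergodic measure-preserving transformation, and f : Ω → ℤ measurable; set X_n = f ∘ T^n for n ∈ ℤ. Then the event that the connected component of 0 in the record graph of (X_n(ω)) is finite has probability 0 or 1; that is, μ[{ω : the set {j ∈ ℤ : R^m(j) = R^n(0) for some m, n ≥ 0} is finite}] ∈ {0, 1}, where R is the record map of (X_n(ω)). -/

import Mathlib

open MeasureTheory

/-- The record map of an integer-valued sequence `x : ℤ → ℤ`: `recordMap x i` is the least
`n > i` such that `∑_{l=i}^{n-1} x l ≥ 0` if such an `n` exists, and `i` otherwise. -/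
noncomputable def recordMap (x : ℤ → ℤ) (i : ℤ) : ℤ := by
  classical
  exact if ∃ n, i < n ∧ 0 ≤ ∑ l ∈ Finset.Ico i n, x l then
    sInf {n : ℤ | i < n ∧ 0 ≤ ∑ l ∈ Finset.Ico i n, x l}
  else i

/-- The `n`-th iterate (`n : ℤ`) of an invertible transformation `T`. -/
def zIter {Ω : Type*} [MeasurableSpace Ω] (T : Ω ≃ᵐ Ω) (n : ℤ) (ω : Ω) : Ω :=
  if 0 ≤ n then (⇑T)^[n.toNat] ω else (⇑T.symm)^[(-n).toNat] ω

/-- The stationary sequence `X_n(ω) = f (T^n ω)`, `n : ℤ`, realized at `ω`. -/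
def statSeq {Ω : Type*} [MeasurableSpace Ω] (T : Ω ≃ᵐ Ω) (f : Ω → ℤ) (ω : Ω) : ℤ → ℤ :=
  fun n => f (zIter T n ω)

/-
Call `k` a sink of the record graph if every partial sum `x k + ⋯ + x (n-1)`, `n > k`, is negative.
Record edges never jump over a sink, so the component of `0` is finite exactly when there are sinks
both in `[0, ∞)` and in `(-∞, 0)`: it then lies between them, while without a sink on the right the
orbit of `0` increases forever, and without a sink on the left all of `(-∞, 0]` flows into the least
sink. Shifting the sequence by `T` moves sinks one step to the left, so the event "a sink in
`[0, ∞)`" is sub-invariant and "a sink in `(-∞, 0)`" is super-invariant under `T`; by ergodicity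
both are trivial, hence so is their intersection.
-/

open Filter Set

def IsRecordSink (x : ℤ → ℤ) (k : ℤ) : Prop :=
  ∀ n, k < n → ∑ l ∈ Finset.Ico k n, x l < 0

section RecordGraph

variable {x : ℤ → ℤ} {i k : ℤ}

theorem not_isRecordSink_iff : ¬ IsRecordSink x i ↔ ∃ n, i < n ∧ 0 ≤ ∑ l ∈ Finset.Ico i n, x l := by
  simp [IsRecordSink]

theorem recordMap_of_isRecordSink (h : IsRecordSink x k) : recordMap x k = k :=
  if_neg fun hex => not_isRecordSink_iff.mpr hex h

theorem recordMap_spec (h : ¬ IsRecordSink x i) :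
    i < recordMap x i ∧ 0 ≤ ∑ l ∈ Finset.Ico i (recordMap x i), x l := by
  rw [not_isRecordSink_iff] at h
  rw [recordMap, if_pos h]
  exact Int.csInf_mem h ⟨i, fun _ hn => hn.1.le⟩

theorem recordMap_le_of_sum_nonneg {n : ℤ} (hn : i < n) (hs : 0 ≤ ∑ l ∈ Finset.Ico i n, x l) :
    recordMap x i ≤ n := by
  rw [recordMap, if_pos ⟨n, hn, hs⟩]
  exact csInf_le ⟨i, fun _ hm => hm.1.le⟩ ⟨hn, hs⟩

theorem le_recordMap (x : ℤ → ℤ) (i : ℤ) : i ≤ recordMap x i := by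
  by_cases h : IsRecordSink x i
  · rw [recordMap_of_isRecordSink h]
  · exact (recordMap_spec h).1.le

theorem le_iterate_recordMap (x : ℤ → ℤ) (i : ℤ) (m : ℕ) : i ≤ (recordMap x)^[m] i :=
  Function.id_le_iterate_of_id_le (le_recordMap x) m i

theorem recordMap_le_of_isRecordSink (hk : IsRecordSink x k) (hi : i ≤ k) : recordMap x i ≤ k := by
  rcases hi.eq_or_lt with rfl | hik
  · rw [recordMap_of_isRecordSink hk]
  by_contra! hkR
  have hi : ¬ IsRecordSink x i := fun h => by rw [recordMap_of_isRecordSink h] at hkR; omega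
  have hbefore : ∑ l ∈ Finset.Ico i k, x l < 0 := by
    by_contra! hs
    exact absurd (recordMap_le_of_sum_nonneg hik hs) (not_le.mpr hkR)
  have hsplit : ∑ l ∈ Finset.Ico i (recordMap x i), x l
      = ∑ l ∈ Finset.Ico i k, x l + ∑ l ∈ Finset.Ico k (recordMap x i), x l := by
    rw [← Finset.Ico_union_Ico_eq_Ico hik.le hkR.le,
      Finset.sum_union (Finset.Ico_disjoint_Ico_consecutive _ _ _)]
  linarith [(recordMap_spec hi).2, hk _ hkR]

theorem iterate_recordMap_le_of_isRecordSink (hk : IsRecordSink x k) (hi : i ≤ k) (m : ℕ) :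
    (recordMap x)^[m] i ≤ k :=
  MapsTo.iterate (s := Iic k) (fun _ hj => recordMap_le_of_isRecordSink hk hj) m hi

theorem exists_iterate_recordMap_eq_of_isRecordSink (hk : IsRecordSink x k) (i : ℤ) (hi : i ≤ k)
    (hno : ∀ j, i ≤ j → j < k → ¬ IsRecordSink x j) : ∃ m, (recordMap x)^[m] i = k := by
  rcases hi.eq_or_lt with rfl | hik
  · exact ⟨0, rfl⟩
  have hstep := (recordMap_spec (hno i le_rfl hik)).1
  obtain ⟨m, hm⟩ := exists_iterate_recordMap_eq_of_isRecordSink hk _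
    (recordMap_le_of_isRecordSink hk hi) fun j hj => hno j (hstep.le.trans hj)
  exact ⟨m + 1, hm⟩
termination_by (k - i).toNat
decreasing_by omega

theorem strictMono_iterate_recordMap (h : ∀ j, i ≤ j → ¬ IsRecordSink x j) :
    StrictMono fun n : ℕ => (recordMap x)^[n] i :=
  strictMono_nat_of_lt_succ fun n => by
    rw [Function.iterate_succ_apply']
    exact (recordMap_spec (h _ (le_iterate_recordMap x i n))).1

def recordComponent (x : ℤ → ℤ) : Set ℤ :=
  {j | ∃ m n : ℕ, (recordMap x)^[m] j = (recordMap x)^[n] 0}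

theorem recordComponent_infinite_of_not_isRecordSink_nonneg (h : ∀ k, 0 ≤ k → ¬ IsRecordSink x k) :
    (recordComponent x).Infinite :=
  infinite_of_injective_forall_mem (strictMono_iterate_recordMap h).injective
    fun n => ⟨0, n, rfl⟩

theorem recordComponent_infinite_of_not_isRecordSink_neg (h : ∀ k, k < 0 → ¬ IsRecordSink x k) :
    (recordComponent x).Infinite := by
  by_cases hsink : ∃ k, IsRecordSink x k
  swap
  · simp only [not_exists] at hsink
    exact recordComponent_infinite_of_not_isRecordSink_nonneg fun k _ => hsink k
  obtain ⟨k₀, hk₀, hleast⟩ := Int.exists_least_of_bdd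
    ⟨0, fun k hk => not_lt.mp fun hneg => h k hneg hk⟩ hsink
  have hk₀nonneg : 0 ≤ k₀ := not_lt.mp fun hneg => h k₀ hneg hk₀
  have hreach : ∀ i ≤ (0 : ℤ), ∃ m, (recordMap x)^[m] i = k₀ := fun i hi =>
    exists_iterate_recordMap_eq_of_isRecordSink hk₀ i (hi.trans hk₀nonneg)
      fun j _ hj hjsink => absurd (hleast j hjsink) (not_le.mpr hj)
  obtain ⟨n₀, hn₀⟩ := hreach 0 le_rfl
  refine infinite_of_injective_forall_mem (f := fun n : ℕ => -(n : ℤ))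
    (fun a b hab => by simpa using hab) fun a => ?_
  obtain ⟨m, hm⟩ := hreach (-(a : ℤ)) (by omega)
  exact ⟨m, n₀, hm.trans hn₀.symm⟩

theorem recordComponent_subset_Ioc {k' : ℤ} (hk : IsRecordSink x k) (hk₀ : 0 ≤ k)
    (hk' : IsRecordSink x k') (hk'₀ : k' < 0) : recordComponent x ⊆ Ioc k' k := by
  rintro j ⟨m, n, hmn⟩
  have h0 := iterate_recordMap_le_of_isRecordSink hk hk₀ n
  have h0' := le_iterate_recordMap x 0 n
  have hj := le_iterate_recordMap x j m
  refine ⟨not_le.mp fun hjk' => ?_, by omega⟩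
  have := iterate_recordMap_le_of_isRecordSink hk' hjk' m
  omega

theorem recordComponent_finite_iff :
    (recordComponent x).Finite ↔
      (∃ k, 0 ≤ k ∧ IsRecordSink x k) ∧ ∃ k, k < 0 ∧ IsRecordSink x k := by
  refine ⟨fun hfin => ⟨?_, ?_⟩, fun ⟨⟨k, hk₀, hk⟩, ⟨k', hk'₀, hk'⟩⟩ =>
    (finite_Ioc k' k).subset (recordComponent_subset_Ioc hk hk₀ hk' hk'₀)⟩
  · by_contra! h
    exact recordComponent_infinite_of_not_isRecordSink_nonneg h hfin
  · by_contra! h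
    exact recordComponent_infinite_of_not_isRecordSink_neg h hfin

theorem isRecordSink_shift_iff : IsRecordSink (fun n => x (n + 1)) k ↔ IsRecordSink x (k + 1) := by
  refine ⟨fun h n hn => ?_, fun h n hn => ?_⟩
  · simpa [Finset.sum_Ico_add'] using h (n - 1) (by omega)
  · simpa [Finset.sum_Ico_add'] using h (n + 1) (by omega)

end RecordGraph

section Stationary

variable {Ω : Type*} [MeasurableSpace Ω]

theorem zIter_succ_apply (T : Ω ≃ᵐ Ω) (n : ℤ) (ω : Ω) :
    zIter T (n + 1) ω = zIter T n (T ω) := by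
  unfold zIter
  by_cases h : 0 ≤ n
  · rw [if_pos h, if_pos (by omega), show (n + 1).toNat = n.toNat + 1 by omega,
      Function.iterate_succ_apply]
  · rcases eq_or_ne n (-1) with rfl | h1
    · simp
    · rw [if_neg h, if_neg (by omega), show (-n).toNat = (-(n + 1)).toNat + 1 by omega,
        Function.iterate_succ_apply, MeasurableEquiv.symm_apply_apply]

theorem measurable_zIter (T : Ω ≃ᵐ Ω) (n : ℤ) : Measurable (zIter T n) := by
  unfold zIter
  split_ifs
  · exact T.measurable.iterate _
  · exact T.symm.measurable.iterate _

theorem isRecordSink_statSeq_apply_iff (T : Ω ≃ᵐ Ω) (f : Ω → ℤ) (ω : Ω) (k : ℤ) :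
    IsRecordSink (statSeq T f (T ω)) k ↔ IsRecordSink (statSeq T f ω) (k + 1) := by
  have hshift : statSeq T f (T ω) = fun n => statSeq T f ω (n + 1) :=
    funext fun n => congrArg f (zIter_succ_apply T n ω).symm
  rw [hshift]
  exact isRecordSink_shift_iff

theorem measurableSet_exists_isRecordSink {x : Ω → ℤ → ℤ} (hx : ∀ n, Measurable fun ω => x ω n)
    (p : ℤ → Prop) : MeasurableSet {ω | ∃ k, p k ∧ IsRecordSink (x ω) k} := by
  simp only [ofPred_exists, ofPred_and, IsRecordSink, ofPred_forall]
  exact .iUnion fun k => (MeasurableSet.const _).inter <| .iInter fun n => .iInter fun _ =>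
    measurableSet_lt (Finset.measurable_sum _ fun l _ => hx l) measurable_const

end Stationary

theorem MeasureTheory.measure_eq_zero_or_one_of_eventuallyConst {Ω : Type*} [MeasurableSpace Ω]
    {μ : Measure Ω} [IsProbabilityMeasure μ] {s : Set Ω} (hs : EventuallyConst s (ae μ)) :
    μ s = 0 ∨ μ s = 1 := by
  rcases eventuallyConst_set'.mp hs with h | h
  · exact .inl (ae_eq_empty.mp h)
  · exact .inr ((measure_congr h).trans measure_univ)

/-- For a stationary ergodic integer-valued sequence `X_n = f ∘ T^n`, the event that the
connected component of `0` in the record graph of `(X_n(ω))` is finite has probability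
`0` or `1`. -/
theorem record_component_zero_finite_trivial {Ω : Type*} [MeasurableSpace Ω]
    (μ : Measure Ω) [IsProbabilityMeasure μ] (T : Ω ≃ᵐ Ω)
    (hT : Ergodic (⇑T) μ) (f : Ω → ℤ) (hf : Measurable f) :
    μ {ω | {j : ℤ | ∃ m n : ℕ,
        (recordMap (statSeq T f ω))^[m] j = (recordMap (statSeq T f ω))^[n] 0}.Finite}
      = 0 ∨
    μ {ω | {j : ℤ | ∃ m n : ℕ,
        (recordMap (statSeq T f ω))^[m] j = (recordMap (statSeq T f ω))^[n] 0}.Finite}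
      = 1 := by
  set W := {ω | ∃ k, 0 ≤ k ∧ IsRecordSink (statSeq T f ω) k}
  set V := {ω | ∃ k, k < 0 ∧ IsRecordSink (statSeq T f ω) k}
  have hx : ∀ n, Measurable fun ω => statSeq T f ω n := fun n => hf.comp (measurable_zIter T n)
  have hW : T ⁻¹' W ⊆ W := fun ω ⟨k, hk₀, hk⟩ =>
    ⟨k + 1, by omega, (isRecordSink_statSeq_apply_iff T f ω k).mp hk⟩
  have hV : V ⊆ T ⁻¹' V := fun ω ⟨k, hk₀, hk⟩ =>
    ⟨k - 1, by omega, (isRecordSink_statSeq_apply_iff T f ω _).mpr (by rwa [sub_add_cancel])⟩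
  have hWconst : EventuallyConst W (ae μ) := eventuallyConst_set'.mpr <|
    hT.ae_empty_or_univ_of_preimage_ae_le
      (measurableSet_exists_isRecordSink hx _).nullMeasurableSet hW.eventuallyLE
  have hVconst : EventuallyConst V (ae μ) := eventuallyConst_set'.mpr <|
    hT.ae_empty_or_univ_of_ae_le_preimage
      (measurableSet_exists_isRecordSink hx _).nullMeasurableSet hV.eventuallyLE
  have hevent : {ω | (recordComponent (statSeq T f ω)).Finite} = W ∩ V :=
    ext fun ω => recordComponent_finite_iff
  exact hevent ▸ measure_eq_zero_or_one_of_eventuallyConst (hWconst.comp₂ (· ∧ ·) hVconst)
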